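/- arXiv:math/0605782 — 8 statements merged into one kernel-verified Lean document; each statement's English description precedes it below -/
import Mathlib

section
/- Let Γ be a finite group and p a prime, and let E denote the additive group of functions Γ → ZMod p. For every subgroup L of Γ there exists an additive character χ : AddChar E ℂ such that {g : Γ | ∀ f : E, χ (fun x => f (g⁻¹ * x)) = χ f} = L. -/
/-!
Compose an injective additive character of `ZMod p` with the functional `f ↦ ∑_{x ∈ L} f x`.
Its stabilizer is that of the functional: left translation by `g ∈ L` permutes `L`, while for
`g ∉ L` the functional sees the point mass at `1` but not its translate, the point mass at `g`.
-/

namespace Subgroup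

variable {G R : Type*} [Group G] [AddCommMonoid R] (L : Subgroup G) [Fintype L]

def sumAddHom : (G → R) →+ R where
  toFun f := ∑ x : L, f x
  map_zero' := by simp
  map_add' _ _ := Finset.sum_add_distrib

@[simp]
lemma sumAddHom_apply (f : G → R) : L.sumAddHom f = ∑ x : L, f x := rfl

lemma sumAddHom_comp_mul_left {g : G} (hg : g ∈ L) (f : G → R) :
    L.sumAddHom (fun x => f (g⁻¹ * x)) = L.sumAddHom f :=
  Fintype.sum_equiv (Equiv.mulLeft ⟨g, hg⟩⁻¹) _ _ fun _ => rfl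

lemma sumAddHom_single [DecidableEq G] [DecidablePred (· ∈ L)] (g : G) (r : R) :
    L.sumAddHom (Pi.single g r : G → R) = if g ∈ L then r else 0 := by
  split_ifs with hg
  · rw [sumAddHom_apply, Fintype.sum_eq_single ⟨g, hg⟩ fun x hx => ?_]
    · exact Pi.single_eq_same (M := fun _ => R) g r
    · exact Pi.single_eq_of_ne (M := fun _ => R) (Subtype.coe_ne_coe.mpr hx) r
  · exact Fintype.sum_eq_zero _ fun x =>
      Pi.single_eq_of_ne (M := fun _ => R) (ne_of_mem_of_not_mem x.2 hg) r

lemma mem_of_forall_sumAddHom_comp_mul_left_eq [Nontrivial R] {g : G}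
    (h : ∀ f : G → R, L.sumAddHom (fun x => f (g⁻¹ * x)) = L.sumAddHom f) : g ∈ L := by
  classical
  obtain ⟨r, hr⟩ := exists_ne (0 : R)
  have htranslate : (fun x => (Pi.single 1 r : G → R) (g⁻¹ * x)) = Pi.single g r := by
    funext x
    simp only [Pi.single_apply, inv_mul_eq_one, eq_comm]
  have hsum := h (Pi.single 1 r)
  rw [htranslate, sumAddHom_single, sumAddHom_single, if_pos L.one_mem] at hsum
  by_contra hg
  rw [if_neg hg] at hsum
  exact hr hsum.symm

lemma setOf_forall_sumAddHom_comp_mul_left_eq [Nontrivial R] :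
    {g : G | ∀ f : G → R, L.sumAddHom (fun x => f (g⁻¹ * x)) = L.sumAddHom f} = L :=
  Set.ext fun _ =>
    ⟨L.mem_of_forall_sumAddHom_comp_mul_left_eq, fun hg => L.sumAddHom_comp_mul_left hg⟩

end Subgroup

/-- For every subgroup `L` of a finite group `Γ` and prime `p`, there is an additive
character `χ` of `E = (Γ → ZMod p)` with values in `ℂ` whose stabilizer in `Γ`, under
the left-translation action of `Γ` on `E`, is exactly `L`. -/
theorem stmt1 (Γ : Type*) [Group Γ] [Fintype Γ] (p : ℕ) (hp : p.Prime)
    (L : Subgroup Γ) :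
    ∃ χ : AddChar (Γ → ZMod p) ℂ,
      {g : Γ | ∀ f : Γ → ZMod p, χ (fun x => f (g⁻¹ * x)) = χ f} = (L : Set Γ) := by
  classical
  have : NeZero p := ⟨hp.ne_zero⟩
  have : Fact (1 < p) := ⟨hp.one_lt⟩
  refine ⟨ZMod.stdAddChar.compAddMonoidHom L.sumAddHom, ?_⟩
  simp only [AddChar.compAddMonoidHom_apply, ZMod.injective_stdAddChar.eq_iff]
  exact L.setOf_forall_sumAddHom_comp_mul_left_eq
end

section
/- The subgroup H₁ of U₁ has exactly 24 elements and is isomorphic, as a group, to the symmetric group Equiv.Perm (Fin 4). -/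
/-- The symmetric group on four letters. -/
abbrev S₄ := Equiv.Perm (Fin 4)

/-- The alternating group on four letters, as a (normal) subgroup of `S₄`. -/
abbrev A₄ : Subgroup S₄ := alternatingGroup (Fin 4)

/-- `U₁ = A₄ ⋊ S₄`, the external semidirect product of `S₄` acting on `A₄` by
conjugation. -/
abbrev U₁ := A₄ ⋊[MulAut.conjNormal] S₄

/-- The transposition `(1 2)`. -/
def τ : S₄ := Equiv.swap 0 1

/-- `H₁`, the subgroup of `U₁` generated by the image of `inl : A₄ →* U₁` together
with the element `inr τ`. -/
def H₁ : Subgroup U₁ :=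
  Subgroup.closure
    (Set.range (SemidirectProduct.inl : ↥A₄ →* U₁) ∪ {SemidirectProduct.inr τ})

/-- The multiplication homomorphism `U₁ →* S₄`, `(a, s) ↦ a * s`. -/
def φmul : U₁ →* S₄ :=
  SemidirectProduct.lift A₄.subtype (MonoidHom.id S₄) (fun g => by
    ext a
    simp [MulAut.conjNormal_apply])

lemma tau_sq : τ * τ = 1 := Equiv.swap_mul_self 0 1

lemma tau_not_mem : τ ∉ A₄ := by
  simp [A₄, Equiv.Perm.mem_alternatingGroup, τ, Equiv.Perm.sign_swap (by decide : (0:Fin 4) ≠ 1)]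

lemma right_mem (x : U₁) (hx : x ∈ H₁) : x.right ∈ Subgroup.zpowers τ := by
  have : H₁ ≤ (Subgroup.zpowers τ).comap SemidirectProduct.rightHom := by
    rw [H₁, Subgroup.closure_le]
    rintro y (⟨a, rfl⟩ | rfl)
    · simp [Subgroup.one_mem]
    · simp [Subgroup.mem_zpowers]
  exact this hx

lemma zpow_tau (n : ℤ) : τ ^ n = 1 ∨ τ ^ n = τ := by
  have h2 : τ ^ (2:ℤ) = 1 := by
    rw [zpow_two, tau_sq]
  rcases Int.even_or_odd n with ⟨m, hm⟩ | ⟨m, hm⟩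
  · left; rw [hm, ← two_mul, zpow_mul, h2, one_zpow]
  · right; rw [hm, zpow_add, zpow_mul, h2, one_zpow, one_mul, zpow_one]

lemma inj : Function.Injective (φmul.domRestrict H₁) := by
  rw [← MonoidHom.ker_eq_bot_iff, eq_bot_iff]
  rintro ⟨x, hx⟩ hker
  have h1 : (x.left : S₄) * x.right = 1 := hker
  have h2 : x.right ∈ Subgroup.zpowers τ := right_mem x hx
  have h3 : x.right ∈ A₄ := by
    have : x.right = (x.left : S₄)⁻¹ := (inv_eq_of_mul_eq_one_right h1).symm
    rw [this]; exact A₄.inv_mem x.left.2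
  obtain ⟨n, hn⟩ := h2
  have hn' : τ ^ n = x.right := hn
  have hxr : x.right = 1 := by
    rcases zpow_tau n with h | h
    · rw [← hn', h]
    · exfalso; exact tau_not_mem (by rw [← h, hn']; exact h3)
  have hxl : (x.left : S₄) = 1 := by rwa [hxr, mul_one] at h1
  have : x = 1 := by
    cases x
    congr 1
    exact Subtype.ext hxl
  simpa [Subgroup.mem_bot, Subtype.ext_iff] using this

lemma surj : Function.Surjective (φmul.domRestrict H₁) := by
  intro g
  have hA : ∀ a : A₄, SemidirectProduct.inl a ∈ H₁ :=
    fun a => Subgroup.subset_closure (Or.inl ⟨a, rfl⟩)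
  have hτ : SemidirectProduct.inr τ ∈ H₁ := Subgroup.subset_closure (Or.inr rfl)
  by_cases hg : g ∈ A₄
  · exact ⟨⟨SemidirectProduct.inl ⟨g, hg⟩, hA _⟩, by simp [φmul, MonoidHom.restrict_apply]⟩
  · have hgτ : g * τ ∈ A₄ := by
      rw [Equiv.Perm.mem_alternatingGroup, map_mul]
      rw [Equiv.Perm.mem_alternatingGroup] at hg
      rcases Int.units_eq_one_or (Equiv.Perm.sign g) with h | h
      · exact absurd h hg
      · rw [h, τ, Equiv.Perm.sign_swap (by decide : (0:Fin 4) ≠ 1)]; rfl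
    refine ⟨⟨SemidirectProduct.inl ⟨g * τ, hgτ⟩ * (SemidirectProduct.inr τ)⁻¹,
      H₁.mul_mem (hA _) (H₁.inv_mem hτ)⟩, ?_⟩
    simp [φmul, MonoidHom.restrict_apply, mul_assoc, τ]

noncomputable def iso : H₁ ≃* S₄ := MulEquiv.ofBijective _ ⟨inj, surj⟩

/-- `H₁` has exactly 24 elements and is isomorphic to the symmetric group on four
letters. -/
theorem stmt5 : Nat.card H₁ = 24 ∧ Nonempty (H₁ ≃* Equiv.Perm (Fin 4)) := by
  refine ⟨?_, ⟨iso⟩⟩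
  rw [Nat.card_congr iso.toEquiv, Nat.card_eq_fintype_card, Fintype.card_perm,
    Fintype.card_fin]
  rfl
end

section
/- The subgroup H₁ is not subnormal in U₁: there is no natural number n and chain of subgroups H₁ = P₀ ≤ P₁ ≤ ⋯ ≤ Pₙ = U₁ such that each Pᵢ is normal in Pᵢ₊₁ (i.e., Pᵢ.subgroupOf Pᵢ₊₁ is a normal subgroup of Pᵢ₊₁). -/
/-!
Since `τ` is a transposition, its conjugates generate `S₄`, so the normal closure of `H₁`
contains both `inl A₄` and `inr S₄` and is all of `U₁`. A proper subnormal subgroup lies in a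
proper normal subgroup, so `H₁` could only be subnormal if it were all of `U₁`; but `H₁` maps
into the stabiliser of `2` under `U₁ → S₄`.
-/

open SemidirectProduct Subgroup

theorem Subgroup.isSubnormal_of_chain {G : Type*} [Group G] {n : ℕ}
    (P : Fin (n + 1) → Subgroup G)
    (hlast : P (Fin.last n) = ⊤)
    (hstep : ∀ i : Fin n,
      P i.castSucc ≤ P i.succ ∧ ((P i.castSucc).subgroupOf (P i.succ)).Normal) :
    (P 0).IsSubnormal :=
  Fin.reverseInduction (motive := fun i => (P i).IsSubnormal) (hlast ▸ .top)
    (fun i ih => .step _ _ (hstep i).1 ih (hstep i).2) 0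

theorem Subgroup.IsSubnormal.eq_top_of_normalClosure_eq_top {G : Type*} [Group G]
    {H : Subgroup G} (hH : H.IsSubnormal) (hcl : normalClosure (H : Set G) = ⊤) : H = ⊤ := by
  obtain h | ⟨K, hK, hHK, hKtop⟩ := hH.lt_normal
  · exact h
  · have hclK : normalClosure (H : Set G) ≤ K := normalClosure_le_normal hHK
    exact absurd (hcl ▸ hclK) hKtop.not_ge

theorem Equiv.Perm.normalClosure_swap_eq_top {α : Type*} [DecidableEq α] [Finite α] {a b : α}
    (hab : a ≠ b) : normalClosure {swap a b} = ⊤ := by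
  rw [eq_top_iff, ← closure_isSwap, closure_le]
  rintro _ ⟨c, d, hcd, rfl⟩
  obtain ⟨g, hg⟩ := isConj_iff.1 (isConj_swap hab hcd)
  rw [← hg]
  exact normalClosure_normal.conj_mem _ (subset_normalClosure (Set.mem_singleton _)) g

theorem SemidirectProduct.range_inl_sup_range_inr {N G : Type*} [Group N] [Group G]
    {φ : G →* MulAut N} :
    (inl : N →* N ⋊[φ] G).range ⊔ (inr : G →* N ⋊[φ] G).range = ⊤ := by
  refine eq_top_iff.2 fun x _ => ?_
  rw [← inl_left_mul_inr_right x]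
  exact mul_mem_sup ⟨_, rfl⟩ ⟨_, rfl⟩

lemma inl_mem_H₁ (a : A₄) : (inl a : U₁) ∈ H₁ :=
  subset_closure (Set.mem_union_left _ ⟨a, rfl⟩)

lemma inr_τ_mem_H₁ : inr τ ∈ H₁ :=
  subset_closure (Set.mem_union_right _ rfl)

lemma normalClosure_H₁_eq_top : normalClosure (H₁ : Set U₁) = ⊤ := by
  set N := normalClosure (H₁ : Set U₁)
  have hH₁N : H₁ ≤ N := le_normalClosure
  have hinl : (inl : A₄ →* U₁).range ≤ N := by
    rintro _ ⟨a, rfl⟩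
    exact hH₁N (inl_mem_H₁ a)
  have hinr : (inr : S₄ →* U₁).range ≤ N := by
    have hτ : normalClosure {τ} ≤ N.comap inr :=
      normalClosure_le_normal (Set.singleton_subset_iff.2 (hH₁N inr_τ_mem_H₁))
    rw [τ, Equiv.Perm.normalClosure_swap_eq_top (by decide), top_le_iff] at hτ
    rw [MonoidHom.range_eq_map, ← hτ]
    exact map_comap_le _ _
  rw [eq_top_iff, ← range_inl_sup_range_inr]
  exact sup_le hinl hinr

lemma H₁_ne_top : H₁ ≠ ⊤ := by
  have hle :
      H₁ ≤ (MulAction.stabilizer S₄ (2 : Fin 4)).comap (rightHom : U₁ →* S₄) := by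
    rw [H₁, closure_le]
    rintro _ (⟨a, rfl⟩ | rfl)
    · simp
    · simp only [SetLike.mem_coe, mem_comap, rightHom_inr, MulAction.mem_stabilizer_iff, τ]
      decide
  intro h
  have hswap := hle (h ▸ mem_top (inr (Equiv.swap 2 3) : U₁))
  simp only [mem_comap, rightHom_inr, MulAction.mem_stabilizer_iff] at hswap
  exact absurd hswap (by decide)

/-- `H₁` is not subnormal in `U₁`: there is no finite chain of subgroups
`H₁ = P₀ ≤ P₁ ≤ ⋯ ≤ Pₙ = U₁` in which each term is normal in the next. -/
theorem stmt6 :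
    ¬ ∃ (n : ℕ) (P : Fin (n + 1) → Subgroup U₁),
        P 0 = H₁ ∧ P (Fin.last n) = ⊤ ∧
        ∀ i : Fin n,
          P i.castSucc ≤ P i.succ ∧ ((P i.castSucc).subgroupOf (P i.succ)).Normal := by
  rintro ⟨n, P, h0, hlast, hstep⟩
  have hsub : H₁.IsSubnormal := h0 ▸ isSubnormal_of_chain P hlast hstep
  exact H₁_ne_top (hsub.eq_top_of_normalClosure_eq_top normalClosure_H₁_eq_top)
end

section
/- K₁ is contained in H₁, and the quotient group H₁ ⧸ (K₁.subgroupOf H₁) is isomorphic to the symmetric group Equiv.Perm (Fin 3). -/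
/-- `K₁`, the image in `U₁` of the Klein four-group (the commutator subgroup of `A₄`)
under the canonical injection `inl : A₄ →* U₁`. -/
def K₁ : Subgroup U₁ := Subgroup.map SemidirectProduct.inl (commutator ↥A₄)

namespace Stmt7Aux

open Equiv SemidirectProduct
open scoped commutatorElement

def partner : Fin 3 → Fin 4 → Fin 4
| 0 => ![1,0,3,2]
| 1 => ![2,3,0,1]
| 2 => ![3,2,1,0]

def toIdx : Fin 4 → Fin 3 := ![0,0,1,2]

instance : SMul S₄ (Fin 3) := ⟨fun σ i => toIdx (σ (partner i (σ⁻¹ 0)))⟩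

set_option maxHeartbeats 4000000 in
set_option maxRecDepth 10000 in
instance : MulAction S₄ (Fin 3) where
  one_smul := by decide
  mul_smul := by decide

/-- The homomorphism `S₄ → S₃` given by the action on the three pairings. -/
def φ₃ : S₄ →* Equiv.Perm (Fin 3) := MulAction.toPermHom S₄ (Fin 3)

set_option maxHeartbeats 1000000 in
set_option maxRecDepth 10000 in
lemma sign_φ₃ : ∀ σ : S₄, Equiv.Perm.sign (φ₃ σ) = Equiv.Perm.sign σ := by decide

/-- The multiplication homomorphism `U₁ → S₄`. -/
def mhom : U₁ →* S₄ :=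
  SemidirectProduct.lift A₄.subtype (MonoidHom.id S₄) (by
    intro g
    ext n
    simp [MulAut.conjNormal_apply])

lemma A3_comm (x y : Equiv.Perm (Fin 3)) (hx : x ∈ alternatingGroup (Fin 3))
    (hy : y ∈ alternatingGroup (Fin 3)) : Commute x y := by
  have hcard : Nat.card ↥(alternatingGroup (Fin 3)) = 3 := by
    rw [Nat.card_eq_fintype_card]
    have h2 := two_mul_card_alternatingGroup (α := Fin 3)
    rw [Fintype.card_perm, Fintype.card_fin, show Nat.factorial 3 = 6 from rfl] at h2
    omega
  haveI : IsCyclic ↥(alternatingGroup (Fin 3)) := isCyclic_of_prime_card hcard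
  letI : CommGroup ↥(alternatingGroup (Fin 3)) := IsCyclic.commGroup
  have h := mul_comm (⟨x, hx⟩ : alternatingGroup (Fin 3)) ⟨y, hy⟩
  exact congrArg Subtype.val h

lemma W_eq : Subgroup.map A₄.subtype (commutator ↥A₄) = ⁅A₄, A₄⁆ := by
  rw [commutator_def, Subgroup.map_commutator, ← MonoidHom.range_eq_map,
    Subgroup.subtype_range]

lemma comm_le_ker : ⁅A₄, A₄⁆ ≤ φ₃.ker := by
  rw [Subgroup.commutator_le]
  intro a ha b hb
  rw [MonoidHom.mem_ker, map_commutatorElement, commutatorElement_eq_one_iff_commute]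
  refine A3_comm _ _ ?_ ?_ <;>
    rw [Equiv.Perm.mem_alternatingGroup, sign_φ₃] <;>
    [exact ha; exact hb]

def v₁ : S₄ := swap 0 1 * swap 2 3
def v₂ : S₄ := swap 0 2 * swap 1 3
def v₃ : S₄ := swap 0 3 * swap 1 2
def c3 : S₄ := swap 0 2 * swap 0 1
def d3 : S₄ := swap 0 3 * swap 0 1
def e3 : S₄ := swap 1 3 * swap 1 2
def f3 : S₄ := swap 0 2 * swap 0 3
def g3 : S₄ := swap 0 1 * swap 0 2

set_option maxHeartbeats 1000000 in
set_option maxRecDepth 10000 in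
lemma ker_enum : ∀ x : S₄, φ₃ x = 1 → x = 1 ∨ x = v₁ ∨ x = v₂ ∨ x = v₃ := by decide

lemma c3_mem : c3 ∈ A₄ := Equiv.Perm.mem_alternatingGroup.2 (by decide)
lemma d3_mem : d3 ∈ A₄ := Equiv.Perm.mem_alternatingGroup.2 (by decide)
lemma e3_mem : e3 ∈ A₄ := Equiv.Perm.mem_alternatingGroup.2 (by decide)
lemma f3_mem : f3 ∈ A₄ := Equiv.Perm.mem_alternatingGroup.2 (by decide)
lemma g3_mem : g3 ∈ A₄ := Equiv.Perm.mem_alternatingGroup.2 (by decide)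

lemma v₁_comm : v₁ = ⁅c3, d3⁆ := by decide
lemma v₂_comm : v₂ = ⁅c3, f3⁆ := by decide
lemma v₃_comm : v₃ = ⁅c3, e3⁆ := by decide

lemma ker_le_comm : φ₃.ker ≤ ⁅A₄, A₄⁆ := by
  intro x hx
  rcases ker_enum x (MonoidHom.mem_ker.1 hx) with h | h | h | h <;> subst h
  · exact one_mem _
  · exact v₁_comm ▸ Subgroup.commutator_mem_commutator c3_mem d3_mem
  · exact v₂_comm ▸ Subgroup.commutator_mem_commutator c3_mem f3_mem
  · exact v₃_comm ▸ Subgroup.commutator_mem_commutator c3_mem e3_mem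

lemma ker_eq_comm : φ₃.ker = ⁅A₄, A₄⁆ := le_antisymm ker_le_comm comm_le_ker

/-- The subgroup `{1, τ}` of `S₄`. -/
def T : Subgroup S₄ where
  carrier := {x | x = 1 ∨ x = τ}
  one_mem' := Or.inl rfl
  mul_mem' := by
    intro a b ha hb
    rcases ha with rfl | rfl <;> rcases hb with rfl | rfl <;> simp [τ]
  inv_mem' := by
    intro a ha
    rcases ha with rfl | rfl <;> [left; right] <;> decide

lemma mhom_inl (a : ↥A₄) : mhom (SemidirectProduct.inl a) = (a : S₄) :=
  SemidirectProduct.lift_inl _ _ _ a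

lemma mhom_inr (g : S₄) : mhom (SemidirectProduct.inr g) = g :=
  SemidirectProduct.lift_inr _ _ _ g

lemma mem_H₁_inl (a : ↥A₄) : SemidirectProduct.inl a ∈ H₁ :=
  Subgroup.subset_closure (Or.inl ⟨a, rfl⟩)

lemma mem_H₁_inrτ : SemidirectProduct.inr τ ∈ H₁ :=
  Subgroup.subset_closure (Or.inr rfl)

lemma right_mem_T {x : U₁} (hx : x ∈ H₁) : x.right ∈ T := by
  have hmap : Subgroup.map SemidirectProduct.rightHom H₁ ≤ T := by
    rw [H₁, MonoidHom.map_closure]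
    rw [Subgroup.closure_le]
    rintro z ⟨w, hw, rfl⟩
    rcases hw with ⟨a, rfl⟩ | rfl
    · simp only [rightHom_inl]
      exact Or.inl rfl
    · simp only [rightHom_inr]
      exact Or.inr rfl
  exact hmap ⟨x, hx, rfl⟩

lemma τ_not_mem : τ ∉ A₄ := by
  rw [Equiv.Perm.mem_alternatingGroup]
  decide

/-- The restriction of `φ₃ ∘ mhom` to `H₁`. -/
def ψ : ↥H₁ →* Equiv.Perm (Fin 3) := (φ₃.comp mhom).comp H₁.subtype

lemma mhom_eq (x : U₁) : mhom x = (x.left : S₄) * x.right := by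
  conv_lhs => rw [← SemidirectProduct.inl_left_mul_inr_right x]
  rw [map_mul]
  rfl

lemma ker_ψ : ψ.ker = K₁.subgroupOf H₁ := by
  ext x
  rw [MonoidHom.mem_ker, Subgroup.mem_subgroupOf]
  constructor
  · intro hx
    have hW : mhom ↑x ∈ ⁅A₄, A₄⁆ := ker_le_comm hx
    have hWA : mhom ↑x ∈ A₄ := Subgroup.commutator_le.2
      (fun g₁ h₁ g₂ h₂ =>
        mul_mem (mul_mem (mul_mem h₁ h₂) (inv_mem h₁)) (inv_mem h₂)) hW
    have hmx : mhom ↑x = ((↑x : U₁).left : S₄) * (↑x : U₁).right := mhom_eq _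
    have hr : (↑x : U₁).right ∈ T := right_mem_T x.2
    have hr1 : (↑x : U₁).right = 1 := by
      rcases hr with h | h
      · exact h
      · exfalso
        apply τ_not_mem
        have : (↑x : U₁).right = ((↑x : U₁).left : S₄)⁻¹ * mhom ↑x := by
          rw [hmx]; group
        rw [← h, this]
        exact mul_mem (inv_mem (↑x : U₁).left.2) hWA
    have hx_eq : (↑x : U₁) = SemidirectProduct.inl (↑x : U₁).left :=
      SemidirectProduct.ext (by simp) (by simp [hr1])
    have hml : mhom ↑x = ((↑x : U₁).left : S₄) := by rw [hmx, hr1, mul_one]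
    have hWm : mhom ↑x ∈ Subgroup.map A₄.subtype (commutator ↥A₄) := W_eq ▸ hW
    obtain ⟨c, hc, hceq⟩ := hWm
    have : c = (↑x : U₁).left := Subtype.ext (by rw [← hml]; exact hceq)
    exact ⟨c, hc, by rw [this, ← hx_eq]⟩
  · rintro ⟨c, hc, hceq⟩
    have : mhom ↑x = (c : S₄) := by
      rw [← hceq]
      exact SemidirectProduct.lift_inl _ _ _ c
    show φ₃ (mhom ↑x) = 1
    rw [this]
    exact comm_le_ker (W_eq ▸ Subgroup.mem_map_of_mem A₄.subtype hc)

set_option maxHeartbeats 1000000 in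
set_option maxRecDepth 10000 in
lemma ψ_swap12 : Equiv.swap 1 2 ∈ ψ.range := by
  refine ⟨⟨SemidirectProduct.inr τ, mem_H₁_inrτ⟩, ?_⟩
  show φ₃ (mhom (SemidirectProduct.inr τ)) = _
  rw [mhom_inr]
  decide

set_option maxHeartbeats 1000000 in
set_option maxRecDepth 10000 in
lemma ψ_swap02 : Equiv.swap 0 2 ∈ ψ.range := by
  refine ⟨⟨SemidirectProduct.inl ⟨c3, c3_mem⟩ * SemidirectProduct.inr τ,
    mul_mem (mem_H₁_inl _) mem_H₁_inrτ⟩, ?_⟩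
  show φ₃ (mhom (SemidirectProduct.inl ⟨c3, c3_mem⟩ * SemidirectProduct.inr τ)) = _
  rw [map_mul, mhom_inl, mhom_inr]
  decide

set_option maxHeartbeats 4000000 in
set_option maxRecDepth 10000 in
lemma ψ_swap01 : Equiv.swap 0 1 ∈ ψ.range := by
  refine ⟨⟨SemidirectProduct.inl ⟨g3, g3_mem⟩ * SemidirectProduct.inr τ,
    mul_mem (mem_H₁_inl _) mem_H₁_inrτ⟩, ?_⟩
  show φ₃ (mhom (SemidirectProduct.inl ⟨g3, g3_mem⟩ * SemidirectProduct.inr τ)) = _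
  rw [map_mul, mhom_inl, mhom_inr]
  decide

lemma ψ_surj : Function.Surjective ψ := by
  rw [← MonoidHom.range_eq_top, eq_top_iff, ← Equiv.Perm.closure_isSwap,
    Subgroup.closure_le]
  rintro σ ⟨a, b, hab, rfl⟩
  have : Equiv.swap a b = Equiv.swap 1 2 ∨ Equiv.swap a b = Equiv.swap 0 2 ∨
      Equiv.swap a b = Equiv.swap 0 1 := by
    revert hab; revert a b; decide
  rcases this with h | h | h <;> rw [h]
  · exact ψ_swap12
  · exact ψ_swap02
  · exact ψ_swap01

end Stmt7Aux

open Stmt7Aux in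
/-- `K₁ ≤ H₁`, the subgroup `K₁.subgroupOf H₁` is normal in `H₁`, and the quotient
group `H₁ ⧸ K₁.subgroupOf H₁` is isomorphic to the symmetric group on three letters. -/
theorem stmt7 :
    K₁ ≤ H₁ ∧ (K₁.subgroupOf H₁).Normal ∧
      ∀ [hn : (K₁.subgroupOf H₁).Normal],
        Nonempty ((H₁ ⧸ K₁.subgroupOf H₁) ≃* Equiv.Perm (Fin 3)) := by
  have hKH : K₁ ≤ H₁ := by
    rintro x ⟨c, hc, rfl⟩
    exact mem_H₁_inl c
  have hnormal : (K₁.subgroupOf H₁).Normal := by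
    rw [← ker_ψ]; exact ψ.normal_ker
  refine ⟨hKH, hnormal, ?_⟩
  intro hn
  exact ⟨(QuotientGroup.quotientMulEquivOfEq ker_ψ.symm).trans
    (QuotientGroup.quotientKerEquivOfSurjective ψ ψ_surj)⟩
end

section
/- There exists a subgroup L₁ of U₁ with K₁ ≤ L₁ ≤ H₁ such that L₁ has index 3 in H₁ (i.e., (L₁.subgroupOf H₁).index = 3). -/
/-- A dihedral subgroup of order 8 in `S₄`: permutations preserving the partition
`{{0,1},{2,3}}`. -/
def Dih : Subgroup S₄ where
  carrier := {s | ({s 0, s 1} : Finset (Fin 4)) = {0,1} ∨ ({s 0, s 1} : Finset (Fin 4)) = {2,3}}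
  one_mem' := by decide
  mul_mem' := by
    intro a b ha hb
    revert ha hb; revert a b; decide
  inv_mem' := by
    intro a ha
    revert ha; revert a; decide

instance : DecidablePred (· ∈ Dih) := fun _ =>
  show Decidable (_ ∨ _) from inferInstance

noncomputable def ε (s : S₄) : S₄ := if Equiv.Perm.sign s = 1 then 1 else τ

lemma sign_τ : Equiv.Perm.sign τ = -1 := by decide

lemma sign_ε (s : S₄) : Equiv.Perm.sign (ε s) = Equiv.Perm.sign s := by
  unfold ε
  rcases Int.units_eq_one_or (Equiv.Perm.sign s) with h | h <;> simp [h, sign_τ]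

lemma ε_mul' (a b : S₄) : ε (a * b) = ε b * ε a := by
  unfold ε
  rcases Int.units_eq_one_or (Equiv.Perm.sign a) with ha | ha <;>
    rcases Int.units_eq_one_or (Equiv.Perm.sign b) with hb | hb <;>
      simp [ha, hb, map_mul, τ, Equiv.swap_mul_self]

lemma ε_inv (a : S₄) : (ε a)⁻¹ = ε a := by
  unfold ε; split <;> simp [τ]

lemma ε_sq (a : S₄) : ε a * ε a = 1 := by
  unfold ε; split <;> simp [τ, Equiv.swap_mul_self]

lemma mem_A (s : S₄) : s * ε s ∈ A₄ := by
  rw [Equiv.Perm.mem_alternatingGroup, map_mul, sign_ε]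
  rcases Int.units_eq_one_or (Equiv.Perm.sign s) with h | h <;> simp [h]

/-- The embedding of `S₄` into `U₁` whose image is `H₁`. -/
noncomputable def σ : S₄ →* U₁ where
  toFun s := ⟨⟨s * ε s, mem_A s⟩, ε s⟩
  map_one' := by
    have h : ε 1 = 1 := by unfold ε; simp
    refine SemidirectProduct.ext ?_ ?_ <;> simp [h]
  map_mul' a b := by
    refine SemidirectProduct.ext ?_ ?_
    · show (⟨a * b * ε (a * b), _⟩ : ↥A₄) = ⟨a * ε a, _⟩ * MulAut.conjNormal (ε a) ⟨b * ε b, _⟩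
      apply Subtype.ext
      simp only [Subgroup.coe_mul, MulAut.conjNormal_apply]
      rw [ε_mul', ε_inv]
      calc a * b * (ε b * ε a) = a * (ε a * ε a) * (b * ε b) * ε a := by
              rw [ε_sq]; group
        _ = a * ε a * (ε a * (b * ε b) * ε a) := by group
    · show ε (a * b) = ε a * ε b
      rw [ε_mul']
      unfold ε
      rcases Int.units_eq_one_or (Equiv.Perm.sign a) with ha | ha <;>
        rcases Int.units_eq_one_or (Equiv.Perm.sign b) with hb | hb <;> simp [ha, hb]

lemma σ_left (s : S₄) : ((σ s).left : S₄) = s * ε s := rfl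
lemma σ_right (s : S₄) : (σ s).right = ε s := rfl

lemma σ_injective : Function.Injective σ := by
  intro a b h
  have h1 : ε a = ε b := congrArg SemidirectProduct.right h
  have h2 : a * ε a = b * ε b := congrArg (fun x => ((SemidirectProduct.left x : ↥A₄) : S₄)) h
  rw [h1] at h2
  exact mul_right_cancel h2

lemma σ_coe (a : ↥A₄) : σ (a : S₄) = SemidirectProduct.inl a := by
  have hε : ε (a : S₄) = 1 := by
    unfold ε
    rw [if_pos (Equiv.Perm.mem_alternatingGroup.mp a.2)]
  refine SemidirectProduct.ext ?_ ?_
  · apply Subtype.ext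
    show (a : S₄) * ε (a : S₄) = _
    rw [hε, mul_one]; rfl
  · exact hε

lemma σ_τ : σ τ = SemidirectProduct.inr τ := by
  have hε : ε τ = τ := by
    unfold ε; rw [if_neg]; rw [sign_τ]; decide
  refine SemidirectProduct.ext ?_ ?_
  · apply Subtype.ext
    show τ * ε τ = _
    rw [hε]
    simp [τ, Equiv.swap_mul_self]
  · exact hε

lemma H₁_eq : H₁ = Subgroup.map σ ⊤ := by
  apply le_antisymm
  · rw [H₁, Subgroup.closure_le]
    rintro x (⟨a, rfl⟩ | rfl)
    · exact ⟨(a : S₄), trivial, σ_coe a⟩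
    · exact ⟨τ, trivial, σ_τ⟩
  · rintro _ ⟨s, -, rfl⟩
    have hmem : σ s = SemidirectProduct.inl ⟨s * ε s, mem_A s⟩ *
        SemidirectProduct.inr (ε s) := by
      rw [← SemidirectProduct.inl_left_mul_inr_right (σ s)]; rfl
    rw [hmem]
    apply mul_mem
    · exact Subgroup.subset_closure (Or.inl ⟨_, rfl⟩)
    · unfold ε
      split
      · simp only [map_one]; exact one_mem _
      · exact Subgroup.subset_closure (Or.inr rfl)

set_option maxRecDepth 10000 in
lemma comm_le' : ∀ x y : S₄, Equiv.Perm.sign x = 1 → Equiv.Perm.sign y = 1 →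
    x * y * x⁻¹ * y⁻¹ ∈ Dih := by decide

open scoped commutatorElement in
lemma comm_le : ∀ x y : S₄, x ∈ A₄ → y ∈ A₄ → ⁅x, y⁆ ∈ Dih := fun x y hx hy =>
  comm_le' x y (Equiv.Perm.mem_alternatingGroup.mp hx) (Equiv.Perm.mem_alternatingGroup.mp hy)

lemma card_Dih : Nat.card ↥Dih = 8 := by
  rw [Nat.card_eq_fintype_card]; decide

lemma card_S₄ : Nat.card S₄ = 24 := by
  rw [Nat.card_eq_fintype_card]; decide

/-- There is a subgroup `L₁` of `U₁` with `K₁ ≤ L₁ ≤ H₁` and `|H₁ : L₁| = 3`. -/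
theorem stmt8 :
    ∃ L₁ : Subgroup U₁, K₁ ≤ L₁ ∧ L₁ ≤ H₁ ∧ (L₁.subgroupOf H₁).index = 3 := by
  refine ⟨Subgroup.map σ Dih, ?_, ?_, ?_⟩
  · rintro _ ⟨a, ha, rfl⟩
    refine ⟨(a : S₄), ?_, σ_coe a⟩
    have : commutator ↥A₄ ≤ Dih.comap A₄.subtype := by
      rw [commutator, Subgroup.commutator_le]
      intro g₁ _ g₂ _
      exact comm_le _ _ g₁.2 g₂.2
    exact this ha
  · rw [H₁_eq]
    exact Subgroup.map_mono le_top
  · have hle : Subgroup.map σ Dih ≤ H₁ := by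
      rw [H₁_eq]; exact Subgroup.map_mono le_top
    have hcardL : Nat.card ↥(Subgroup.map σ Dih) = 8 := by
      rw [← card_Dih]
      exact (Nat.card_congr (Subgroup.equivMapOfInjective Dih σ σ_injective).toEquiv).symm
    have hcardH : Nat.card ↥H₁ = 24 := by
      rw [H₁_eq]
      have := Nat.card_congr (Subgroup.equivMapOfInjective ⊤ σ σ_injective).toEquiv
      rw [← this]
      have := Nat.card_congr (Subgroup.topEquiv (G := S₄)).toEquiv
      rw [this, card_S₄]
    have hmul := Subgroup.card_mul_index ((Subgroup.map σ Dih).subgroupOf H₁)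
    have hsub : Nat.card ↥((Subgroup.map σ Dih).subgroupOf H₁) = 8 := by
      rw [← hcardL]
      exact Nat.card_congr (Subgroup.subgroupOfEquivOfLe hle).toEquiv
    rw [hsub, hcardH] at hmul
    omega
end

section
/- For every subgroup L₁ of U₁ with K₁ ≤ L₁ ≤ H₁ and (L₁.subgroupOf H₁).index = 3, one has L₁ ⊓ A₁ = K₁ and L₁ ⊔ A₁ = H₁. -/
/-- `A₁`, the image of `A₄` in `U₁` under the canonical injection `inl`. -/
def A₁ : Subgroup U₁ := (SemidirectProduct.inl : ↥A₄ →* U₁).range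

open Equiv SemidirectProduct Subgroup
open scoped commutatorElement

instance decMemA4 : DecidablePred (· ∈ A₄) := fun f =>
  decidable_of_iff _ (Equiv.Perm.mem_alternatingGroup (f := f)).symm

-- auxiliary three-cycles in A₄
def aa : ↥A₄ := ⟨swap 0 1 * swap 1 2, by rw [Equiv.Perm.mem_alternatingGroup]; decide⟩
def bb : ↥A₄ := ⟨swap 0 1 * swap 1 3, by rw [Equiv.Perm.mem_alternatingGroup]; decide⟩
def cc : ↥A₄ := ⟨swap 0 2 * swap 2 3, by rw [Equiv.Perm.mem_alternatingGroup]; decide⟩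

/-- The Klein four group as explicit subgroup of `A₄`. -/
def V : Subgroup ↥A₄ where
  carrier := {x | (x : S₄) = 1 ∨ (x : S₄) = swap 0 1 * swap 2 3 ∨
    (x : S₄) = swap 0 2 * swap 1 3 ∨ (x : S₄) = swap 0 3 * swap 1 2}
  one_mem' := Or.inl rfl
  mul_mem' := by
    intro x y hx hy
    revert hx hy
    revert x y
    decide
  inv_mem' := by
    intro x hx
    revert hx
    revert x
    decide

instance decMemV : DecidablePred (· ∈ V) := fun x =>
  inferInstanceAs (Decidable (_ ∨ _ ∨ _ ∨ _))

lemma commutator_eq_V : commutator ↥A₄ = V := by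
  apply le_antisymm
  · rw [commutator_def, Subgroup.commutator_le]
    intro g hg h hh
    clear hg hh
    show ⁅g, h⁆ ∈ V
    revert g h
    decide
  · intro x hx
    have h1 : ⁅aa, bb⁆ ∈ commutator ↥A₄ :=
      Subgroup.commutator_mem_commutator (Subgroup.mem_top _) (Subgroup.mem_top _)
    have h2 : ⁅aa * aa, bb⁆ ∈ commutator ↥A₄ :=
      Subgroup.commutator_mem_commutator (Subgroup.mem_top _) (Subgroup.mem_top _)
    have h3 : ⁅bb, cc⁆ ∈ commutator ↥A₄ :=
      Subgroup.commutator_mem_commutator (Subgroup.mem_top _) (Subgroup.mem_top _)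
    have hone : (1 : ↥A₄) ∈ commutator ↥A₄ := one_mem _
    rcases hx with h | h | h | h
    · have : x = 1 := Subtype.ext h; rw [this]; exact hone
    · have : x = ⁅aa, bb⁆ := Subtype.ext (by rw [h]; decide)
      rw [this]; exact h1
    · have : x = ⁅aa * aa, bb⁆ := Subtype.ext (by rw [h]; decide)
      rw [this]; exact h2
    · have : x = ⁅bb, cc⁆ := Subtype.ext (by rw [h]; decide)
      rw [this]; exact h3

lemma card_V : Nat.card V = 4 := by
  rw [Nat.card_eq_fintype_card]
  decide

lemma card_A4 : Nat.card ↥A₄ = 12 := by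
  rw [Nat.card_eq_fintype_card]
  decide

/-- `U₁` is equivalent to the product type. -/
def prodEquiv : (↥A₄ × S₄) ≃ U₁ where
  toFun p := ⟨p.1, p.2⟩
  invFun x := (x.left, x.right)
  left_inv p := rfl
  right_inv x := rfl

instance : Fintype U₁ := Fintype.ofEquiv _ prodEquiv

lemma card_U1 : Nat.card U₁ = 288 := by
  rw [← Nat.card_congr prodEquiv, Nat.card_prod, card_A4, Nat.card_eq_fintype_card]
  rw [Fintype.card_perm]
  decide

lemma A1_le_H1 : A₁ ≤ H₁ := by
  rintro x ⟨a, rfl⟩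
  exact Subgroup.subset_closure (Or.inl ⟨a, rfl⟩)

lemma card_A1 : Nat.card A₁ = 12 := by
  rw [← card_A4]
  exact Nat.card_congr (Equiv.ofInjective _ SemidirectProduct.inl_injective).symm

lemma card_K1 : Nat.card K₁ = 4 := by
  rw [K₁, ← Nat.card_congr
    (Subgroup.equivMapOfInjective (commutator ↥A₄) _ SemidirectProduct.inl_injective).toEquiv,
    commutator_eq_V, card_V]

lemma K1_le_A1 : K₁ ≤ A₁ := by
  rintro x ⟨a, _, rfl⟩
  exact ⟨a, rfl⟩

lemma H1_eq : H₁ = Subgroup.comap (SemidirectProduct.rightHom : U₁ →* S₄) (zpowers τ) := by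
  apply le_antisymm
  · rw [H₁, Subgroup.closure_le]
    rintro x (⟨a, rfl⟩ | rfl)
    · show rightHom (inl a) ∈ zpowers τ
      rw [rightHom_inl]
      exact one_mem _
    · show rightHom (inr τ) ∈ zpowers τ
      rw [rightHom_inr]
      exact mem_zpowers τ
  · intro x hx
    have hx' : rightHom x ∈ zpowers τ := hx
    obtain ⟨k, hk⟩ := Subgroup.mem_zpowers_iff.mp hx'
    rw [← SemidirectProduct.inl_left_mul_inr_right x]
    refine mul_mem (Subgroup.subset_closure (Or.inl ⟨x.left, rfl⟩)) ?_
    have hk' : τ ^ k = x.right := hk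
    have hr : (inr x.right : U₁) = ((inr : S₄ →* U₁) τ) ^ k := by
      rw [← map_zpow, hk']
    rw [hr]
    have hmem : (inr : S₄ →* U₁) τ ∈ H₁ := Subgroup.subset_closure (Or.inr rfl)
    exact H₁.zpow_mem hmem k

lemma orderOf_tau : orderOf τ = 2 := by
  refine orderOf_eq_prime ?_ ?_ <;> decide

lemma card_H1 : Nat.card H₁ = 24 := by
  have hidx : H₁.index = (zpowers τ).index := by
    rw [H1_eq]
    exact Subgroup.index_comap_of_surjective _ SemidirectProduct.rightHom_surjective
  have h1 : (zpowers τ).index * Nat.card (zpowers τ) = Nat.card S₄ :=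
    Subgroup.index_mul_card _
  rw [Nat.card_zpowers, orderOf_tau] at h1
  have hS : Nat.card S₄ = 24 := by
    rw [Nat.card_eq_fintype_card, Fintype.card_perm]
    decide
  rw [hS] at h1
  have h1' : (zpowers τ).index = 12 := by omega
  have h2 : H₁.index * Nat.card H₁ = Nat.card U₁ := Subgroup.index_mul_card _
  rw [card_U1, hidx, h1'] at h2
  omega

/-- Every subgroup `L₁` of `U₁` with `K₁ ≤ L₁ ≤ H₁` and `|H₁ : L₁| = 3` satisfies
`L₁ ⊓ A₁ = K₁` and `L₁ ⊔ A₁ = H₁`. -/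
theorem stmt9 :
    ∀ L₁ : Subgroup U₁, K₁ ≤ L₁ → L₁ ≤ H₁ → (L₁.subgroupOf H₁).index = 3 →
      L₁ ⊓ A₁ = K₁ ∧ L₁ ⊔ A₁ = H₁ := by
  intro L₁ hKL hLH hidx
  have cardL : Nat.card L₁ = 8 := by
    have h := Subgroup.index_mul_card (L₁.subgroupOf H₁)
    rw [hidx, card_H1, Nat.card_congr (Subgroup.subgroupOfEquivOfLe hLH).toEquiv] at h
    omega
  constructor
  · -- inf
    have hKN : K₁ ≤ L₁ ⊓ A₁ := le_inf hKL K1_le_A1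
    have d1 : Nat.card (L₁ ⊓ A₁ : Subgroup U₁) ∣ 8 := by
      have := Subgroup.card_dvd_of_le (inf_le_left : L₁ ⊓ A₁ ≤ L₁)
      rwa [cardL] at this
    have d2 : Nat.card (L₁ ⊓ A₁ : Subgroup U₁) ∣ 12 := by
      have := Subgroup.card_dvd_of_le (inf_le_right : L₁ ⊓ A₁ ≤ A₁)
      rwa [card_A1] at this
    have d3 : (4 : ℕ) ∣ Nat.card (L₁ ⊓ A₁ : Subgroup U₁) := by
      have := Subgroup.card_dvd_of_le hKN
      rwa [card_K1] at this
    have d4 : Nat.card (L₁ ⊓ A₁ : Subgroup U₁) ∣ 4 := Nat.dvd_gcd d1 d2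
    have hc : Nat.card (L₁ ⊓ A₁ : Subgroup U₁) = 4 := Nat.dvd_antisymm d4 d3
    exact (Subgroup.eq_of_le_of_card_ge hKN (by rw [hc, card_K1])).symm
  · -- sup
    have hMH : L₁ ⊔ A₁ ≤ H₁ := sup_le hLH A1_le_H1
    have iA : (A₁.subgroupOf H₁).index = 2 := by
      have h := Subgroup.index_mul_card (A₁.subgroupOf H₁)
      rw [card_H1, Nat.card_congr (Subgroup.subgroupOfEquivOfLe A1_le_H1).toEquiv, card_A1] at h
      omega
    have mono1 : L₁.subgroupOf H₁ ≤ (L₁ ⊔ A₁).subgroupOf H₁ :=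
      Subgroup.comap_mono le_sup_left
    have mono2 : A₁.subgroupOf H₁ ≤ (L₁ ⊔ A₁).subgroupOf H₁ :=
      Subgroup.comap_mono le_sup_right
    have dv1 : ((L₁ ⊔ A₁).subgroupOf H₁).index ∣ 3 := by
      have := Subgroup.index_dvd_of_le mono1
      rwa [hidx] at this
    have dv2 : ((L₁ ⊔ A₁).subgroupOf H₁).index ∣ 2 := by
      have := Subgroup.index_dvd_of_le mono2
      rwa [iA] at this
    have h1 : ((L₁ ⊔ A₁).subgroupOf H₁).index = 1 := by
      exact Nat.dvd_one.mp (Nat.dvd_sub dv1 dv2)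
    have := Subgroup.index_eq_one.mp h1
    exact le_antisymm hMH (Subgroup.subgroupOf_eq_top.mp this)
end

section
/- The group U₁ has no nontrivial normal 3-subgroup: every normal subgroup N of U₁ such that N is a 3-group (IsPGroup 3 N) equals the trivial subgroup. (That is, O₃(U₁) = 1.) -/
/-
The image of a normal `3`-subgroup `N` of `U₁` in `S₄` is a normal `3`-subgroup of `S₄`, hence trivial,
so `N` lies in `A₄`; there it is invariant under conjugation by `S₄`, so it is again a normal
`3`-subgroup of `S₄` and trivial. `O₃(S₄) = 1` because every element of order `3` in `S₄` has a
commutator of order `2`, which cannot lie in a `3`-group.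
-/

open scoped commutatorElement

theorem IsPGroup.eq_one_of_pow_eq_one {p q : ℕ} {G : Type*} [Group G] (hG : IsPGroup p G)
    (hpq : p.Coprime q) {g : G} (hg : g ^ q = 1) : g = 1 :=
  (hG.powEquiv hpq).injective (by simp [hg])

theorem Subgroup.Normal.commutatorElement_mem {G : Type*} [Group G] {M : Subgroup G}
    (hM : M.Normal) (g : G) {x : G} (hx : x ∈ M) : ⁅g, x⁆ ∈ M := by
  rw [commutatorElement_def]
  exact M.mul_mem (hM.conj_mem x hx g) (M.inv_mem hx)

set_option maxRecDepth 4000 in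
theorem Equiv.Perm.exists_commutatorElement_ne_one_sq_eq_one :
    ∀ x : Equiv.Perm (Fin 4), x ^ 3 = 1 → x ≠ 1 →
      ∃ g : Equiv.Perm (Fin 4), ⁅g, x⁆ ≠ 1 ∧ ⁅g, x⁆ ^ 2 = 1 := by
  decide

theorem S₄.eq_bot_of_normal_of_isPGroup_three (M : Subgroup S₄) (hM : M.Normal)
    (h3 : IsPGroup 3 M) : M = ⊥ := by
  have : Fact (Nat.Prime 3) := ⟨Nat.prime_three⟩
  by_contra hne
  have h3_dvd : 3 ∣ Nat.card M :=
    h3.card_eq_or_dvd.resolve_left (mt Subgroup.card_eq_one.mp hne)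
  obtain ⟨x, hx⟩ := exists_prime_orderOf_dvd_card' (G := M) 3 h3_dvd
  have hx_pow : (x : S₄) ^ 3 = 1 := by
    rw [← Subgroup.coe_pow, ← hx, pow_orderOf_eq_one, Subgroup.coe_one]
  have hx_ne : (x : S₄) ≠ 1 := by
    intro h
    rw [OneMemClass.coe_eq_one.mp h, orderOf_one] at hx
    omega
  obtain ⟨g, hne_one, hsq⟩ :=
    Equiv.Perm.exists_commutatorElement_ne_one_sq_eq_one x hx_pow hx_ne
  have hmem : ⁅g, (x : S₄)⁆ ∈ M := hM.commutatorElement_mem g x.2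
  have hcomm : (⟨_, hmem⟩ : M) = 1 :=
    h3.eq_one_of_pow_eq_one (by norm_num : Nat.Coprime 3 2) (Subtype.ext hsq)
  exact hne_one (congrArg Subtype.val hcomm)

section SemidirectProduct

open SemidirectProduct

variable {G : Type*} [Group G] {H : Subgroup G} [H.Normal]

theorem SemidirectProduct.normal_map_subtype_comap_inl {N : Subgroup (H ⋊[MulAut.conjNormal] G)}
    (hN : N.Normal) : ((N.comap inl).map H.subtype).Normal := by
  constructor
  rintro _ ⟨a, ha, rfl⟩ g
  refine ⟨MulAut.conjNormal g a, ?_, by simp [MulAut.conjNormal_apply]⟩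
  show inl (MulAut.conjNormal g a) ∈ N
  rw [inl_aut]
  simpa using hN.conj_mem _ ha (inr g)

theorem SemidirectProduct.eq_bot_of_normal_of_isPGroup {p : ℕ}
    (hG : ∀ M : Subgroup G, M.Normal → IsPGroup p M → M = ⊥)
    (N : Subgroup (H ⋊[MulAut.conjNormal] G)) (hN : N.Normal) (hp : IsPGroup p N) : N = ⊥ := by
  have hN_range : N ≤ (inl : H →* _).range := by
    rw [range_inl_eq_ker_rightHom, ← Subgroup.map_eq_bot_iff]
    exact hG _ (hN.map _ rightHom_surjective) (hp.map _)
  have hN_comap : N.comap inl = ⊥ := by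
    rw [← Subgroup.map_eq_bot_iff_of_injective _ H.subtype_injective]
    exact hG _ (normal_map_subtype_comap_inl hN) ((hp.comap_of_injective _ inl_injective).map _)
  rw [← Subgroup.map_comap_eq_self hN_range, hN_comap, Subgroup.map_bot]

end SemidirectProduct

/-- `O₃(U₁) = 1`: every normal subgroup of `U₁` which is a `3`-group is trivial. -/
theorem stmt10 :
    ∀ N : Subgroup U₁, N.Normal → IsPGroup 3 N → N = ⊥ :=
  SemidirectProduct.eq_bot_of_normal_of_isPGroup S₄.eq_bot_of_normal_of_isPGroup_three
end

section
/- The group Γ has no nontrivial normal 3-subgroup: every normal subgroup N of Γ such that N is a 3-group (IsPGroup 3 N) equals the trivial subgroup. (That is, O₃(Γ) = 1.) -/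
set_option maxRecDepth 10000

/-- The homomorphism from the cyclic group `C₂ = Multiplicative (ZMod 2)` to the
automorphisms of `U × U` sending the nontrivial element to the coordinate-swap
automorphism `MulEquiv.prodComm`. -/
def swapHom (U : Type*) [Group U] : Multiplicative (ZMod 2) →* MulAut (U × U) where
  toFun g := if Multiplicative.toAdd g = 0 then 1 else MulEquiv.prodComm
  map_one' := by simp
  map_mul' := by
    intro a b
    have h : ∀ x : ZMod 2, x = 0 ∨ x = 1 := by decide
    have h2 : (1 + 1 : ZMod 2) = 0 := by decide
    have hswap : (MulEquiv.prodComm : MulAut (U × U)) * MulEquiv.prodComm = 1 :=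
      MulEquiv.ext fun x => rfl
    have hab : Multiplicative.toAdd (a * b) =
        Multiplicative.toAdd a + Multiplicative.toAdd b := rfl
    rcases h (Multiplicative.toAdd a) with ha | ha <;>
      rcases h (Multiplicative.toAdd b) with hb | hb <;>
        simp [hab, ha, hb, hswap, h2]

/-- `Γ = (U₁ × U₁) ⋊ C₂`, where the nontrivial element of `C₂` acts by swapping the
coordinates. -/
abbrev Γ' := (U₁ × U₁) ⋊[swapHom U₁] Multiplicative (ZMod 2)

lemma lemS : ∀ x : Equiv.Perm (Fin 4), x^3 = 1 → x ≠ 1 →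
    ∃ g : Equiv.Perm (Fin 4), ¬ (x * (g * x * g⁻¹))^3 = 1 := by decide

lemma c2sq : ∀ y : Multiplicative (ZMod 2), y^2 = 1 := by decide

lemma cube_perm4 {a : Equiv.Perm (Fin 4)} {k : ℕ} (h : a ^ (3^k) = 1) : a ^ 3 = 1 := by
  have h1 : orderOf a ∣ 3 ^ k := orderOf_dvd_of_pow_eq_one h
  obtain ⟨j, hj, hja⟩ := (Nat.dvd_prime_pow Nat.prime_three).mp h1
  have h2 : orderOf a ∣ 24 := by
    have := orderOf_dvd_card (x := a)
    simpa [Fintype.card_perm, Nat.factorial] using this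
  have hj1 : j ≤ 1 := by
    by_contra hc
    have h9 : (9 : ℕ) ∣ 3 ^ j := by
      have : (3:ℕ)^2 ∣ 3^j := Nat.pow_dvd_pow 3 (by omega)
      simpa using this
    have : (9 : ℕ) ∣ 24 := dvd_trans h9 (hja ▸ h2)
    omega
  have hd : orderOf a ∣ 3 := by
    rw [hja]
    calc (3:ℕ)^j ∣ 3^1 := Nat.pow_dvd_pow 3 hj1
    _ = 3 := pow_one 3
  exact orderOf_dvd_iff_pow_eq_one.mp hd

lemma perm4_aux {P : Equiv.Perm (Fin 4) → Prop}
    (hpow : ∀ a, P a → a ^ 3 = 1)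
    (hconj : ∀ a g, P a → P (g * a * g⁻¹))
    (hmul : ∀ a b, P a → P b → P (a * b)) :
    ∀ a, P a → a = 1 := by
  intro a ha
  by_contra hne
  obtain ⟨g, hg⟩ := lemS a (hpow a ha) hne
  exact hg (hpow _ (hmul _ _ ha (hconj _ g ha)))

lemma U1_core (M : Subgroup U₁) (hn : M.Normal) (hp : IsPGroup 3 M) : M = ⊥ := by
  -- Step 1: the S₄-components are trivial.
  have hr : ∀ x ∈ M, x.right = 1 := by
    have hnm : (M.map SemidirectProduct.rightHom).Normal :=
      hn.map _ SemidirectProduct.rightHom_surjective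
    have hpm := hp.map (SemidirectProduct.rightHom (φ := MulAut.conjNormal))
    have key : ∀ a ∈ M.map SemidirectProduct.rightHom, a = 1 := by
      refine perm4_aux ?_ ?_ ?_
      · intro a ha
        obtain ⟨k, hk⟩ := hpm ⟨a, ha⟩
        have h1 : a ^ (3^k) = 1 := by
          have := congrArg Subtype.val hk
          simpa using this
        exact cube_perm4 h1
      · intro a g ha; exact hnm.conj_mem a ha g
      · intro a b ha hb; exact mul_mem ha hb
    intro x hx
    exact key _ ⟨x, hx, rfl⟩
  -- Step 2: the A₄-components are trivial.
  have hl : ∀ (a : Equiv.Perm (Fin 4)) (ha : a ∈ A₄),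
      SemidirectProduct.inl (⟨a, ha⟩ : A₄) ∈ M → a = 1 := by
    have key := perm4_aux (P := fun a =>
        ∃ ha : a ∈ A₄, SemidirectProduct.inl (φ := MulAut.conjNormal) (⟨a, ha⟩ : A₄) ∈ M)
      ?_ ?_ ?_
    · intro a ha hmem; exact key a ⟨ha, hmem⟩
    · rintro a ⟨ha, hmem⟩
      obtain ⟨k, hk⟩ := hp ⟨_, hmem⟩
      have h1 : (SemidirectProduct.inl (⟨a, ha⟩ : A₄) : U₁) ^ (3^k) = 1 := by
        have := congrArg Subtype.val hk
        simpa using this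
      rw [← map_pow] at h1
      have h2 : (⟨a, ha⟩ : A₄) ^ (3^k) = 1 :=
        SemidirectProduct.inl_injective (by simpa using h1)
      have h3 : a ^ (3^k) = 1 := by
        have := congrArg Subtype.val h2
        simpa using this
      exact cube_perm4 h3
    · rintro a g ⟨ha, hmem⟩
      have hga : g * a * g⁻¹ ∈ A₄ :=
        alternatingGroup.normal.conj_mem a ha g
      refine ⟨hga, ?_⟩
      have he : (⟨g * a * g⁻¹, hga⟩ : A₄) = MulAut.conjNormal g (⟨a, ha⟩ : A₄) :=
        Subtype.ext (by simp [MulAut.conjNormal_apply])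
      rw [he, SemidirectProduct.inl_aut]
      have := hn.conj_mem _ hmem (SemidirectProduct.inr g)
      simpa [mul_assoc] using this
    · rintro a b ⟨ha, hma⟩ ⟨hb, hmb⟩
      refine ⟨mul_mem ha hb, ?_⟩
      have he : (⟨a * b, mul_mem ha hb⟩ : A₄) = ⟨a, ha⟩ * ⟨b, hb⟩ := rfl
      rw [he, map_mul]
      exact mul_mem hma hmb
  -- Conclusion
  rw [Subgroup.eq_bot_iff_forall]
  intro x hx
  have hx1 : x = SemidirectProduct.inl x.left := by
    conv_lhs => rw [← SemidirectProduct.inl_left_mul_inr_right x]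
    rw [hr x hx, map_one, mul_one]
  have hmem : SemidirectProduct.inl x.left ∈ M := hx1 ▸ hx
  have hcoe : (x.left : Equiv.Perm (Fin 4)) = 1 := hl _ x.left.2 (by simpa using hmem)
  have : x.left = 1 := Subtype.ext hcoe
  rw [hx1, this, map_one]

/-- `O₃(Γ) = 1`: every normal subgroup of `Γ` which is a `3`-group is trivial. -/
theorem stmt12 :
    ∀ N : Subgroup Γ', N.Normal → IsPGroup 3 N → N = ⊥ := by
  intro N hn hp
  have hr : ∀ x ∈ N, x.right = 1 := by
    intro x hx
    obtain ⟨k, hk⟩ := hp ⟨x, hx⟩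
    have hx2 : x ^ (3^k) = 1 := by
      have := congrArg Subtype.val hk
      simpa using this
    have h1 : (x.right : Multiplicative (ZMod 2)) ^ (3^k) = 1 := by
      have := congrArg (SemidirectProduct.rightHom (φ := swapHom U₁)) hx2
      simpa [map_pow] using this
    obtain ⟨m, hm⟩ : Odd (3^k) := Odd.pow (by decide)
    rw [hm, pow_succ, pow_mul, c2sq, one_pow, one_mul] at h1
    exact h1
  set K := N.comap (SemidirectProduct.inl : U₁ × U₁ →* Γ') with hK
  have hKn : K.Normal := by
    constructor
    intro x hx g
    simp only [hK, Subgroup.mem_comap] at hx ⊢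
    have he : SemidirectProduct.inl (φ := swapHom U₁) (g * x * g⁻¹) =
        SemidirectProduct.inl g * SemidirectProduct.inl x * (SemidirectProduct.inl g)⁻¹ := by
      rw [map_mul, map_mul, map_inv]
    rw [he]
    exact hn.conj_mem _ hx _
  have hKp : IsPGroup 3 K := hp.comap_of_injective _ SemidirectProduct.inl_injective
  have h1 : K.map (MonoidHom.fst U₁ U₁) = ⊥ :=
    U1_core _ (hKn.map _ Prod.fst_surjective) (hKp.map _)
  have h2 : K.map (MonoidHom.snd U₁ U₁) = ⊥ :=
    U1_core _ (hKn.map _ Prod.snd_surjective) (hKp.map _)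
  rw [Subgroup.eq_bot_iff_forall]
  intro x hx
  have hx1 : x = SemidirectProduct.inl x.left := by
    conv_lhs => rw [← SemidirectProduct.inl_left_mul_inr_right x]
    rw [hr x hx, map_one, mul_one]
  have hmemK : x.left ∈ K := Subgroup.mem_comap.mpr (hx1 ▸ hx)
  have hf : x.left.1 = 1 := by
    have : x.left.1 ∈ K.map (MonoidHom.fst U₁ U₁) := ⟨x.left, hmemK, rfl⟩
    rw [h1] at this
    simpa using this
  have hs : x.left.2 = 1 := by
    have : x.left.2 ∈ K.map (MonoidHom.snd U₁ U₁) := ⟨x.left, hmemK, rfl⟩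
    rw [h2] at this
    simpa using this
  have : x.left = 1 := Prod.ext hf hs
  rw [hx1, this, map_one]
end
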